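/- arXiv:1211.0783 — 4 statements merged into one kernel-verified Lean document; each statement's English description precedes it below -/
import Mathlib

section
/- For every k ≥ 1, every n ≥ 1, and every natural number m with m > n/2, it holds that T^k_{(n,m)} ≤ 2/n. -/
/-- The Cesàro operator on real sequences (indexed from 1; index 0 is unused):
`[T(a)]_n = (a_1 + ⋯ + a_n)/n`. -/
noncomputable def cesaro (a : ℕ → ℝ) : ℕ → ℝ :=
  fun n => (∑ i ∈ Finset.Icc 1 n, a i) / n

/-- The matrix entry `T^k_{(n,m)} = [T^k(e_m)]_n` where `e_m` is the sequence whose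
`m`-th term is `1` and all other terms are `0`. -/
noncomputable def cesaroEntry (k n m : ℕ) : ℝ :=
  (cesaro^[k] (fun i => if i = m then (1 : ℝ) else 0)) n

/-!
Column `m` of `T^k` vanishes above the diagonal, and its entries in rows `m ≤ n < 2m` satisfy
`T^k_{(n,m)} ≤ 2/n` by induction on `k`: if all of `T^k_{(i,m)}` with `m ≤ i ≤ n` are at most
`2/i ≤ 2/m`, their sum has at most `n + 1 - m ≤ m` terms and is therefore at most `2`, so
dividing by `n` gives the bound for `T^{k+1}`.
-/

open Finset

lemma cesaro_le_div_of_sum_le {a : ℕ → ℝ} {n : ℕ} {C : ℝ}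
    (h : ∑ i ∈ Icc 1 n, a i ≤ C) : cesaro a n ≤ C / n :=
  div_le_div_of_nonneg_right h n.cast_nonneg

lemma sum_Icc_le_of_le_div {a : ℕ → ℝ} {m n : ℕ} {C : ℝ} (hC : 0 ≤ C)
    (hzero : ∀ i < m, a i = 0) (hbound : ∀ i, m ≤ i → i ≤ n → a i ≤ C / i)
    (hn : n < 2 * m) : ∑ i ∈ Icc 1 n, a i ≤ C := by
  have hm : 0 < m := by omega
  have hsupp : ∑ i ∈ Icc 1 n, a i = ∑ i ∈ Icc m n, a i := by
    refine (sum_subset (Icc_subset_Icc_left hm) fun i hi hi' => hzero i ?_).symm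
    simp only [mem_Icc] at hi hi'
    omega
  have hterm : ∀ i ∈ Icc m n, a i ≤ C / m := fun i hi => by
    obtain ⟨hmi, hin⟩ := mem_Icc.mp hi
    exact (hbound i hmi hin).trans
      (div_le_div_of_nonneg_left hC (by exact_mod_cast hm) (by exact_mod_cast hmi))
  calc ∑ i ∈ Icc 1 n, a i
      ≤ ∑ _i ∈ Icc m n, C / m := hsupp ▸ sum_le_sum hterm
    _ = (n + 1 - m : ℕ) * (C / m) := by rw [sum_const, Nat.card_Icc, nsmul_eq_mul]
    _ ≤ m * (C / m) := by gcongr; exact_mod_cast (by omega : n + 1 - m ≤ m)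
    _ = C := mul_div_cancel₀ C (by exact_mod_cast hm.ne')

lemma cesaroEntry_succ (k n m : ℕ) :
    cesaroEntry (k + 1) n m = cesaro (fun i => cesaroEntry k i m) n := by
  rw [cesaroEntry, Function.iterate_succ_apply']
  rfl

lemma cesaroEntry_eq_zero_of_lt (k : ℕ) {n m : ℕ} (h : n < m) : cesaroEntry k n m = 0 := by
  induction k generalizing n with
  | zero => simp [cesaroEntry, h.ne]
  | succ k ih =>
    rw [cesaroEntry_succ, cesaro, sum_eq_zero fun i hi => ih ((mem_Icc.mp hi).2.trans_lt h),
      zero_div]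

lemma cesaroEntry_one_le_inv (n m : ℕ) : cesaroEntry 1 n m ≤ 1 / n := by
  refine cesaro_le_div_of_sum_le ?_
  rw [sum_ite_eq' (Icc 1 n) m fun _ => (1 : ℝ)]
  split_ifs <;> norm_num

lemma cesaroEntry_le_two_div_of_lt_two_mul {k : ℕ} (hk : 1 ≤ k) {n m : ℕ} (hn : n < 2 * m) :
    cesaroEntry k n m ≤ 2 / n := by
  induction k, hk using Nat.le_induction generalizing n with
  | base =>
    exact (cesaroEntry_one_le_inv n m).trans
      (div_le_div_of_nonneg_right one_le_two n.cast_nonneg)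
  | succ k _ ih =>
    rw [cesaroEntry_succ]
    exact cesaro_le_div_of_sum_le (sum_Icc_le_of_le_div zero_le_two
      (fun i hi => cesaroEntry_eq_zero_of_lt k hi) (fun i _ hin => ih (by omega)) hn)

theorem cesaroEntry_le_two_div_general (k n m : ℕ) (hk : 1 ≤ k)
    (hm : (n : ℝ) / 2 < (m : ℝ)) :
    cesaroEntry k n m ≤ 2 / n := by
  have hn : n < 2 * m := by exact_mod_cast (by linarith : (n : ℝ) < 2 * m)
  exact cesaroEntry_le_two_div_of_lt_two_mul hk hn

/-- For `k ≥ 1`, `n ≥ 1` and any natural number `m` with `m > n/2`,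
we have `T^k_{(n,m)} ≤ 2/n`. -/
theorem cesaroEntry_le_two_div (k n m : ℕ) (hk : 1 ≤ k) (hn : 1 ≤ n)
    (hm : (n : ℝ) / 2 < (m : ℝ)) :
    cesaroEntry k n m ≤ 2 / n :=
  cesaroEntry_le_two_div_general k n m hk hm
end

section
/- For all k, n, λ ≥ 1 with λ ≤ n, it holds that ∑_{i=1}^{λ} T^k_{(n+λ, n+i)} ≤ 2λ/(n+λ). -/
open Finset

lemma cesaro_le {a : ℕ → ℝ} {c : ℝ} (hc : 0 ≤ c) (ha : ∀ i, a i ≤ c) (n : ℕ) :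
    cesaro a n ≤ c := by
  refine div_le_of_le_mul₀ n.cast_nonneg hc ?_
  calc ∑ i ∈ Icc 1 n, a i ≤ #(Icc 1 n) • c := sum_le_card_nsmul _ _ _ fun i _ => ha i
    _ = c * n := by simp [mul_comm]

lemma cesaro_iterate_le {a : ℕ → ℝ} {c : ℝ} (hc : 0 ≤ c) (ha : ∀ i, a i ≤ c) (k n : ℕ) :
    cesaro^[k] a n ≤ c := by
  induction k generalizing n with
  | zero => exact ha n
  | succ k ih => rw [Function.iterate_succ_apply']; exact cesaro_le hc ih n

lemma cesaro_single_le (m N : ℕ) :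
    cesaro (fun i => if i = m then (1 : ℝ) else 0) N ≤ 1 / m := by
  rw [cesaro, sum_ite_eq']
  split_ifs with hm
  · exact one_div_le_one_div_of_le (by exact_mod_cast (mem_Icc.1 hm).1)
      (by exact_mod_cast (mem_Icc.1 hm).2)
  · simp

lemma cesaroEntry_le_one_div {k : ℕ} (hk : 1 ≤ k) (N m : ℕ) : cesaroEntry k N m ≤ 1 / m := by
  obtain ⟨j, rfl⟩ := Nat.exists_eq_add_of_le' hk
  rw [cesaroEntry, Function.iterate_succ_apply]
  exact cesaro_iterate_le (by positivity) (cesaro_single_le m) j N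

theorem cesaroEntry_sum_upper_bound_general (k n l : ℕ) (hk : 1 ≤ k) (hln : l ≤ n) :
    ∑ i ∈ Finset.Icc 1 l, cesaroEntry k (n + l) (n + i) ≤
      2 * (l : ℝ) / ((n + l : ℕ) : ℝ) := by
  have term_le : ∀ i ∈ Icc 1 l, cesaroEntry k (n + l) (n + i) ≤ 2 / ((n + l : ℕ) : ℝ) := by
    intro i hi
    obtain ⟨hi1, hil⟩ := mem_Icc.1 hi
    have hnl_pos : (0 : ℝ) < ((n + l : ℕ) : ℝ) := by exact_mod_cast (by omega)
    have hnl : ((n + l : ℕ) : ℝ) ≤ 2 * ((n + i : ℕ) : ℝ) := by exact_mod_cast (by omega)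
    calc cesaroEntry k (n + l) (n + i) ≤ 1 / ((n + i : ℕ) : ℝ) :=
          cesaroEntry_le_one_div hk _ _
      _ = 2 / (2 * ((n + i : ℕ) : ℝ)) := by field_simp
      _ ≤ 2 / ((n + l : ℕ) : ℝ) :=
          div_le_div_of_nonneg_left zero_le_two hnl_pos hnl
  calc ∑ i ∈ Icc 1 l, cesaroEntry k (n + l) (n + i)
      ≤ #(Icc 1 l) • (2 / ((n + l : ℕ) : ℝ)) := sum_le_card_nsmul _ _ _ term_le
    _ = 2 * (l : ℝ) / ((n + l : ℕ) : ℝ) := by simp [mul_div_assoc, mul_comm]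

/-- For all `k, n, λ ≥ 1` with `λ ≤ n`: `∑_{i=1}^{λ} T^k_{(n+λ, n+i)} ≤ 2λ/(n+λ)`. -/
theorem cesaroEntry_sum_upper_bound (k n l : ℕ) (hk : 1 ≤ k) (hn : 1 ≤ n) (hl : 1 ≤ l)
    (hln : l ≤ n) :
    ∑ i ∈ Finset.Icc 1 l, cesaroEntry k (n + l) (n + i) ≤
      2 * (l : ℝ) / ((n + l : ℕ) : ℝ) :=
  cesaroEntry_sum_upper_bound_general k n l hk hln
end

section
/- Let V be a separable, metrizable, locally convex topological vector space over ℝ and let A ⊆ V be an arbitrary subset. Then the set Θ_{A,V} = { θ ∈ A^ℕ : for every k ≥ 1, the set { [T^k(θ)]_n : n ≥ 1 } is dense in the convex hull conv(A) } is a dense G_δ subset of A^ℕ, where A^ℕ carries the product topology. -/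
/-- The Cesàro operator on sequences in a real vector space (indexed from 1; index 0 is
unused): `[T(θ)]_n = (θ_1 + ⋯ + θ_n)/n`. -/
noncomputable def cesaroV {V : Type*} [AddCommGroup V] [Module ℝ V] (θ : ℕ → V) : ℕ → V :=
  fun n => (n : ℝ)⁻¹ • ∑ i ∈ Finset.Icc 1 n, θ i

/-!
With the discrete topology on `A`, the space `ℕ → A` is completely metrizable, hence Baire, and
its topology is finer than the product topology. The generic set is the countable intersection,
over `k ≥ 1` and basic open sets `U` meeting `conv A`, of the open sets of sequences whose `k`-th
Cesàro means visit `U`. So it is a `G_δ`, and by Baire's theorem in the finer topology it is dense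
as soon as each of these open sets meets every cylinder. Averages of periodic sequences in `A`
(rational convex combinations) are dense in `conv A`, and a sequence that eventually coincides with
such a periodic sequence has all iterated Cesàro means converging to its average, by Cesàro's
theorem, which holds in locally convex spaces.
-/

open Filter Topology Finset Function TopologicalSpace

theorem Function.Periodic.sum_range_add {M : Type*} [AddCancelCommMonoid M] {x : ℕ → M} {ℓ : ℕ}
    (hx : Periodic x ℓ) (m : ℕ) : ∑ i ∈ range ℓ, x (m + i) = ∑ i ∈ range ℓ, x i := by
  induction m with
  | zero => simp
  | succ m ih =>
    have h := (sum_range_succ (fun i => x (m + i)) ℓ).symm.trans (sum_range_succ' _ ℓ)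
    rw [← ih, ← add_right_cancel_iff (a := x m)]
    simpa [hx m, add_assoc, add_comm 1] using h.symm

theorem TopologicalSpace.IsTopologicalBasis.subset_closure_iff {Y : Type*} [TopologicalSpace Y]
    {B : Set (Set Y)} (hB : IsTopologicalBasis B) {S R : Set Y} :
    S ⊆ closure R ↔ ∀ b ∈ B, (b ∩ S).Nonempty → (b ∩ R).Nonempty := by
  simp only [Set.subset_def, hB.mem_closure_iff]
  exact ⟨fun h b hb ⟨y, hyb, hyS⟩ => h y hyS b hb hyb, fun h y hyS b hb hyb => h b hb ⟨y, hyb, hyS⟩⟩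

theorem dense_biInter_of_isOpen_of_cylinder {X α : Type*} [TopologicalSpace X] {S : Set α}
    (hS : S.Countable) {O : α → Set (ℕ → X)} (hO : ∀ s ∈ S, IsOpen (O s))
    (hcyl : ∀ s ∈ S, ∀ θ N, (O s ∩ PiNat.cylinder θ N).Nonempty) : Dense (⋂ s ∈ S, O s) := by
  let φ : (ℕ → WithDiscreteTopology X) → ℕ → X := fun θ n => (θ n).ofTopology
  have hφ : Continuous φ :=
    continuous_pi fun n => continuous_of_discreteTopology.comp (continuous_apply n)
  have hφs : Surjective φ := fun θ => ⟨fun n => WithTopology.toTopology _ (θ n), rfl⟩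
  have hdense : Dense (⋂ s ∈ S, φ ⁻¹' O s) := by
    refine dense_biInter_of_isOpen (fun s hs => (hO s hs).preimage hφ) hS fun s hs => ?_
    rw [(PiNat.isTopologicalBasis_cylinders _).dense_iff]
    rintro _ ⟨θ, N, rfl⟩ -
    obtain ⟨θ', hθ'O, hθ'N⟩ := hcyl s hs (φ θ) N
    refine ⟨fun n => WithTopology.toTopology _ (θ' n), fun i hi => ?_, hθ'O⟩
    simp [PiNat.mem_cylinder_iff.1 hθ'N i hi, φ]
  simpa only [← Set.preimage_iInter₂, hφs.image_preimage] using
    hφs.denseRange.dense_image hφ hdense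

section Cesaro

variable {V : Type*} [AddCommGroup V] [Module ℝ V]

theorem cesaroV_eq_smul_sum_range (x : ℕ → V) (n : ℕ) :
    cesaroV x n = (n : ℝ)⁻¹ • ∑ i ∈ range n, x (i + 1) := by
  rw [cesaroV, range_eq_Ico, sum_Ico_add' x, zero_add]
  rfl

theorem cesaroV_sub_const (x : ℕ → V) (y : V) {n : ℕ} (hn : n ≠ 0) :
    cesaroV x n - y = (n : ℝ)⁻¹ • ∑ i ∈ range n, (x (i + 1) - y) := by
  rw [cesaroV_eq_smul_sum_range, sum_sub_distrib, smul_sub, sum_const, card_range,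
    ← Nat.cast_smul_eq_nsmul ℝ, inv_smul_smul₀ (Nat.cast_ne_zero.2 hn)]

theorem cesaroV_add (x x' : ℕ → V) : cesaroV (x + x') = cesaroV x + cesaroV x' := by
  ext n
  simp [cesaroV, sum_add_distrib]

variable [TopologicalSpace V] [IsTopologicalAddGroup V] [ContinuousSMul ℝ V]

theorem continuous_cesaroV_iterate_apply (k n : ℕ) :
    Continuous fun x : ℕ → V => cesaroV^[k] x n := by
  induction k generalizing n with
  | zero => exact continuous_apply n
  | succ k ih =>
    simp only [iterate_succ_apply', cesaroV]
    exact (continuous_finsetSum _ fun i _ => ih i).const_smul _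

theorem tendsto_cesaroV_of_periodic {x : ℕ → V} {ℓ : ℕ} (hx : Periodic x ℓ) (hℓ : ℓ ≠ 0) :
    Tendsto (cesaroV x) atTop (𝓝 ((ℓ : ℝ)⁻¹ • ∑ i ∈ range ℓ, x i)) := by
  set y := (ℓ : ℝ)⁻¹ • ∑ i ∈ range ℓ, x i
  set s : ℕ → V := fun n => ∑ i ∈ range n, (x (i + 1) - y)
  have hs : Periodic s ℓ := fun n => by
    have hshift : ∑ i ∈ range ℓ, x (n + 1 + i) = (ℓ : ℝ) • y := by
      rw [hx.sum_range_add, smul_inv_smul₀ (Nat.cast_ne_zero.2 hℓ)]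
    simp only [s, sum_range_add, sum_sub_distrib, sum_const, card_range,
      ← Nat.cast_smul_eq_nsmul ℝ]
    simp only [add_right_comm n _ 1, add_comm n 1] at hshift ⊢
    rw [hshift, Nat.cast_add, add_smul]
    abel
  -- `s` is periodic, so it takes finitely many values
  have hbdd : Bornology.IsVonNBounded ℝ (s '' ↑(range ℓ)) :=
    ((range ℓ).finite_toSet.image s).isVonNBounded
  have hmem : ∀ n, s n ∈ s '' ↑(range ℓ) := fun n =>
    ⟨n % ℓ, mem_range.2 (Nat.mod_lt n (Nat.pos_of_ne_zero hℓ)), hs.map_mod_nat n⟩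
  have h0 : Tendsto (fun n : ℕ => (n : ℝ)⁻¹ • s n) atTop (𝓝 0) :=
    hbdd.smul_tendsto_zero (.of_forall hmem)
      (tendsto_inv_atTop_zero.comp tendsto_natCast_atTop_atTop)
  rw [← tendsto_sub_nhds_zero_iff]
  refine h0.congr' ?_
  filter_upwards [eventually_ne_atTop 0] with n hn
  exact (cesaroV_sub_const x y hn).symm

variable [LocallyConvexSpace ℝ V]

/-- Each gauge seminorm of the locally convex topology reduces this to the real Cesàro theorem. -/
theorem tendsto_cesaroV {x : ℕ → V} {y : V} (hx : Tendsto x atTop (𝓝 y)) :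
    Tendsto (cesaroV x) atTop (𝓝 y) := by
  have hp := with_gaugeSeminormFamily (𝕜 := ℝ) (E := V)
  rw [hp.tendsto_nhds] at hx ⊢
  intro p ε hε
  set q := gaugeSeminormFamily ℝ V p
  have hq : Tendsto (fun i => q (x (i + 1) - y)) atTop (𝓝 0) := by
    refine tendsto_order.2 ⟨fun a ha => .of_forall fun i => ha.trans_le (apply_nonneg _ _),
      fun a ha => ?_⟩
    exact (tendsto_add_atTop_nat 1).eventually (hx p a ha)
  filter_upwards [hq.cesaro.eventually (gt_mem_nhds hε), eventually_ne_atTop 0] with n hlt hn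
  calc q (cesaroV x n - y) = (n : ℝ)⁻¹ * q (∑ i ∈ range n, (x (i + 1) - y)) := by
        rw [cesaroV_sub_const x y hn, map_smul_eq_mul, Real.norm_of_nonneg (by positivity)]
    _ ≤ (n : ℝ)⁻¹ * ∑ i ∈ range n, q (x (i + 1) - y) := by
        gcongr; exact le_sum_of_subadditive q (map_zero q).le (map_add_le_add q) _ _
    _ < ε := hlt

theorem tendsto_cesaroV_iterate {x : ℕ → V} {y : V} (hx : Tendsto x atTop (𝓝 y)) (k : ℕ) :
    Tendsto (cesaroV^[k] x) atTop (𝓝 y) := by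
  induction k with
  | zero => exact hx
  | succ k ih => rw [iterate_succ_apply']; exact tendsto_cesaroV ih

theorem tendsto_cesaroV_congr {x x' : ℕ → V} {y : V} (hxx' : x =ᶠ[atTop] x')
    (hx : Tendsto (cesaroV x) atTop (𝓝 y)) : Tendsto (cesaroV x') atTop (𝓝 y) := by
  have hd : Tendsto (x' - x) atTop (𝓝 0) :=
    tendsto_const_nhds.congr' (hxx'.mono fun n hn => by simp [hn])
  have h := hx.add (tendsto_cesaroV hd)
  rwa [add_zero, ← Pi.add_def, ← cesaroV_add, add_sub_cancel] at h

end Cesaro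

section PeriodicAverages

variable {V : Type*} [AddCommGroup V] [Module ℝ V]

def periodicAverages (A : Set V) : Set V :=
  {y | ∃ (x : ℕ → V) (ℓ : ℕ), ℓ ≠ 0 ∧ Periodic x ℓ ∧ (∀ i, x i ∈ A) ∧
    y = (ℓ : ℝ)⁻¹ • ∑ i ∈ range ℓ, x i}

theorem centerMass_natCast_mem_periodicAverages {ι : Type*} [Fintype ι] {A : Set V} {c : ι → ℕ}
    (hc : ∑ i, c i ≠ 0) {z : ι → V} (hz : ∀ i, z i ∈ A) :
    univ.centerMass (fun i => (c i : ℝ)) z ∈ periodicAverages A := by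
  set L := Fintype.card (Σ i, Fin (c i))
  have hL : L = ∑ i, c i := by simp [L]
  have hL0 : 0 < L := by omega
  -- run periodically through a list containing each `z i` exactly `c i` times
  let e := Fintype.equivFin (Σ i, Fin (c i))
  let x : ℕ → V := fun n => z (e.symm ⟨n % L, Nat.mod_lt n hL0⟩).1
  refine ⟨x, L, hL0.ne', fun n => by simp [x], fun n => hz _, ?_⟩
  have hsum : ∑ n ∈ range L, x n = ∑ i, c i • z i := by
    rw [← Fin.sum_univ_eq_sum_range]
    simp only [x, Nat.mod_eq_of_lt (Fin.is_lt _), Fin.eta]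
    rw [e.symm.sum_comp (fun σ => z σ.1), Fintype.sum_sigma]
    simp
  rw [hsum, centerMass, hL]
  simp [smul_sum, Nat.cast_smul_eq_nsmul]

/-- Rounding the weights of a convex combination down to multiples of `1 / d` and renormalizing
gives natural weights; as `d → ∞` these combinations converge. -/
theorem convexHull_subset_closure_periodicAverages [TopologicalSpace V] [ContinuousAdd V]
    [ContinuousSMul ℝ V] (A : Set V) : convexHull ℝ A ⊆ closure (periodicAverages A) := by
  intro y hy
  obtain ⟨ι, _, w, z, hw0, hw1, hz, rfl⟩ := mem_convexHull_iff_exists_fintype.1 hy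
  have hw : ∀ i, Tendsto (fun d : ℝ => (⌊w i * d⌋₊ : ℝ) / d) atTop (𝓝 (w i)) :=
    fun i => tendsto_nat_floor_mul_div_atTop (hw0 i)
  have hsum := tendsto_finsetSum univ fun i _ => hw i
  rw [hw1] at hsum
  have hlim : Tendsto (fun d : ℝ => univ.centerMass (fun i => (⌊w i * d⌋₊ : ℝ) / d) z) atTop
      (𝓝 (∑ i, w i • z i)) := by
    simpa only [centerMass, inv_one, one_smul] using
      (hsum.inv₀ one_ne_zero).smul (tendsto_finsetSum _ fun i _ => (hw i).smul_const (z i))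
  refine mem_closure_of_tendsto hlim ?_
  filter_upwards [hsum.eventually_const_lt one_pos, eventually_gt_atTop 0] with d hd hd0
  rw [← sum_div, div_pos_iff_of_pos_right hd0] at hd
  have hscale : (fun i => (⌊w i * d⌋₊ : ℝ) / d) = d⁻¹ • fun i => (⌊w i * d⌋₊ : ℝ) := by
    ext i; simp [div_eq_inv_mul]
  rw [hscale, centerMass_smul_left (hc := inv_ne_zero hd0.ne')]
  exact centerMass_natCast_mem_periodicAverages (by exact_mod_cast hd.ne') hz

end PeriodicAverages

section Generic

variable {V : Type*} [AddCommGroup V] [Module ℝ V] [TopologicalSpace V]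

def cesaroVisits (A : Set V) (k : ℕ) (U : Set V) : Set (ℕ → A) :=
  {θ | ∃ n, 1 ≤ n ∧ cesaroV^[k] (fun i => (θ i : V)) n ∈ U}

theorem setOf_convexHull_subset_closure_eq_biInter (A : Set V) {B : Set (Set V)}
    (hB : IsTopologicalBasis B) :
    {θ : ℕ → A | ∀ k, 1 ≤ k →
        convexHull ℝ A ⊆ closure {x : V | ∃ n, 1 ≤ n ∧ x = cesaroV^[k] (fun i => (θ i : V)) n}} =
      ⋂ p ∈ {p : ℕ × Set V | 1 ≤ p.1 ∧ p.2 ∈ B ∧ (p.2 ∩ convexHull ℝ A).Nonempty},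
        cesaroVisits A p.1 p.2 := by
  ext θ
  simp only [hB.subset_closure_iff, Set.mem_ofPred_eq, Set.mem_iInter, Prod.forall, and_imp,
    cesaroVisits, Set.Nonempty, Set.mem_inter_iff]
  grind

variable [IsTopologicalAddGroup V] [ContinuousSMul ℝ V]

theorem isOpen_cesaroVisits (A : Set V) (k : ℕ) {U : Set V} (hU : IsOpen U) :
    IsOpen (cesaroVisits A k U) := by
  simp only [cesaroVisits, Set.ofPred_exists, Set.ofPred_and]
  exact isOpen_iUnion fun n => isOpen_const.inter <| hU.preimage <|
    (continuous_cesaroV_iterate_apply k n).comp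
      (continuous_pi fun i => continuous_subtype_val.comp (continuous_apply i))

theorem cesaroVisits_inter_cylinder_nonempty [LocallyConvexSpace ℝ V] {A : Set V} {k : ℕ}
    (hk : 1 ≤ k) {U : Set V} (hU : IsOpen U) (hUA : (U ∩ convexHull ℝ A).Nonempty)
    (θ : ℕ → A) (N : ℕ) : (cesaroVisits A k U ∩ PiNat.cylinder θ N).Nonempty := by
  obtain ⟨z, hzU, hzA⟩ := hUA
  obtain ⟨y, hyU, x, ℓ, hℓ, hx, hxA, rfl⟩ :=
    mem_closure_iff.1 (convexHull_subset_closure_periodicAverages A hzA) U hU hzU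
  let θ' : ℕ → A := fun n => if n < N then θ n else ⟨x n, hxA n⟩
  have hθ' : x =ᶠ[atTop] fun n => (θ' n : V) := by
    filter_upwards [eventually_ge_atTop N] with n hn
    simp [θ', not_lt.2 hn]
  have htend : Tendsto (cesaroV^[k] fun n => (θ' n : V)) atTop
      (𝓝 ((ℓ : ℝ)⁻¹ • ∑ i ∈ range ℓ, x i)) := by
    obtain ⟨k, rfl⟩ := Nat.exists_eq_add_of_le' hk
    rw [iterate_succ_apply]
    exact tendsto_cesaroV_iterate
      (tendsto_cesaroV_congr hθ' (tendsto_cesaroV_of_periodic hx hℓ)) k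
  obtain ⟨n, hnU, hn⟩ :=
    ((htend.eventually (hU.mem_nhds hyU)).and (eventually_ge_atTop 1)).exists
  exact ⟨θ', ⟨n, hn, hnU⟩, fun i hi => by simp [θ', hi]⟩

end Generic

/-- Theorem 3.1: if `V` is a separable, metrizable, locally convex topological vector space
over `ℝ` and `A ⊆ V` is arbitrary, then the set of sequences `θ ∈ A^ℕ` such that, for every
`k ≥ 1`, `([T^k(θ)]_n)_{n≥1}` is dense in `conv(A)`, is a dense `G_δ` subset of `A^ℕ` with
the product topology. -/
theorem cesaro_generic_dense (V : Type*) [AddCommGroup V] [Module ℝ V]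
    [TopologicalSpace V] [IsTopologicalAddGroup V] [ContinuousSMul ℝ V]
    [LocallyConvexSpace ℝ V] [TopologicalSpace.MetrizableSpace V]
    [TopologicalSpace.SeparableSpace V]
    (A : Set V) :
    Dense {θ : ℕ → A | ∀ k, 1 ≤ k →
        convexHull ℝ A ⊆
          closure {x : V | ∃ n, 1 ≤ n ∧ x = cesaroV^[k] (fun i => (θ i : V)) n}} ∧
    IsGδ {θ : ℕ → A | ∀ k, 1 ≤ k →
        convexHull ℝ A ⊆
          closure {x : V | ∃ n, 1 ≤ n ∧ x = cesaroV^[k] (fun i => (θ i : V)) n}} := by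
  have : SecondCountableTopology V := by
    let := pseudoMetrizableSpaceUniformity V
    have := pseudoMetrizableSpaceUniformity_countably_generated V
    exact UniformSpace.secondCountable_of_separable V
  set S := {p : ℕ × Set V | 1 ≤ p.1 ∧ p.2 ∈ countableBasis V ∧ (p.2 ∩ convexHull ℝ A).Nonempty}
  have hS : S.Countable := (Set.countable_univ.prod (countable_countableBasis V)).mono
    fun p hp => Set.mem_prod.2 ⟨Set.mem_univ _, hp.2.1⟩
  have hO : ∀ p ∈ S, IsOpen (cesaroVisits A p.1 p.2) :=
    fun p hp => isOpen_cesaroVisits A p.1 (isOpen_of_mem_countableBasis hp.2.1)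
  rw [setOf_convexHull_subset_closure_eq_biInter A (isBasis_countableBasis V)]
  exact ⟨dense_biInter_of_isOpen_of_cylinder hS hO fun p hp =>
      cesaroVisits_inter_cylinder_nonempty hp.1 (isOpen_of_mem_countableBasis hp.2.1) hp.2.2,
    IsGδ.biInter_of_isOpen hS hO⟩
end

section
/- Let A ⊆ [0,1] and let a ∈ A^ℕ be a sequence with all terms in A. If for some n ≥ 1 we have [T(a)]_n < 1/8, then [T²(a)]_n < 15/16. -/
/-!
Write `c = [T(a)]_n` and `m = ⌊n/2⌋`. Every Cesàro mean of a `[0,1]`-valued sequence is at most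
`1`, and for `k ≤ n` nonnegativity gives `k [T(a)]_k ≤ n c`. So among the `n` terms averaged in
`[T²(a)]_n` the first `m` are at most `1` and the others are at most `n c / (m + 1) ≤ 2c < 1/4`,
whence `n [T²(a)]_n ≤ m + (n - m)/4 ≤ 5n/8`.
-/

open Finset

theorem natCast_mul_cesaro (a : ℕ → ℝ) (k : ℕ) :
    (k : ℝ) * cesaro a k = ∑ i ∈ Icc 1 k, a i := by
  rcases Nat.eq_zero_or_pos k with rfl | hk
  · simp
  · exact mul_div_cancel₀ _ (Nat.cast_ne_zero.mpr hk.ne')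

section Cesaro

variable {a : ℕ → ℝ}

theorem cesaro_le_one (ha : ∀ i, 1 ≤ i → a i ≤ 1) (k : ℕ) : cesaro a k ≤ 1 := by
  refine div_le_one_of_le₀ ?_ k.cast_nonneg
  calc ∑ i ∈ Icc 1 k, a i ≤ ∑ _i ∈ Icc 1 k, (1 : ℝ) :=
        sum_le_sum fun i hi => ha i (mem_Icc.mp hi).1
    _ = k := by simp

theorem cesaro_nonneg (ha : ∀ i, 1 ≤ i → 0 ≤ a i) (k : ℕ) : 0 ≤ cesaro a k :=
  div_nonneg (sum_nonneg fun i hi => ha i (mem_Icc.mp hi).1) k.cast_nonneg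

theorem natCast_mul_cesaro_le (ha : ∀ i, 1 ≤ i → 0 ≤ a i) {k n : ℕ} (hkn : k ≤ n) :
    (k : ℝ) * cesaro a k ≤ n * cesaro a n := by
  rw [natCast_mul_cesaro, natCast_mul_cesaro]
  exact sum_le_sum_of_subset_of_nonneg (Icc_subset_Icc_right hkn)
    fun i hi _ => ha i (mem_Icc.mp hi).1

theorem cesaro_le_of_lt_of_le (ha : ∀ i, 1 ≤ i → 0 ≤ a i) {m k n : ℕ} (hmk : m < k)
    (hkn : k ≤ n) : cesaro a k ≤ n * cesaro a n / (m + 1) := by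
  have hk : (m : ℝ) + 1 ≤ k := by exact_mod_cast hmk
  rw [le_div_iff₀ (by positivity)]
  calc cesaro a k * (m + 1) ≤ k * cesaro a k := by
        rw [mul_comm]
        exact mul_le_mul_of_nonneg_right hk (cesaro_nonneg ha k)
    _ ≤ n * cesaro a n := natCast_mul_cesaro_le ha hkn

theorem sum_cesaro_le (ha₀ : ∀ i, 1 ≤ i → 0 ≤ a i) (ha₁ : ∀ i, 1 ≤ i → a i ≤ 1)
    {m n : ℕ} (hmn : m ≤ n) :
    ∑ k ∈ Icc 1 n, cesaro a k ≤ m + (n - m) * (n * cesaro a n / (m + 1)) := by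
  have head : ∑ k ∈ Ioc 0 m, cesaro a k ≤ m :=
    calc ∑ k ∈ Ioc 0 m, cesaro a k ≤ ∑ _k ∈ Ioc 0 m, (1 : ℝ) :=
          sum_le_sum fun k _ => cesaro_le_one ha₁ k
      _ = m := by simp
  have tail : ∑ k ∈ Ioc m n, cesaro a k ≤ (n - m) * (n * cesaro a n / (m + 1)) :=
    calc ∑ k ∈ Ioc m n, cesaro a k ≤ ∑ _k ∈ Ioc m n, n * cesaro a n / (m + 1) :=
          sum_le_sum fun k hk => cesaro_le_of_lt_of_le ha₀ (mem_Ioc.mp hk).1 (mem_Ioc.mp hk).2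
      _ = (n - m) * (n * cesaro a n / (m + 1)) := by
          rw [sum_const, Nat.card_Ioc, nsmul_eq_mul, Nat.cast_sub hmn]
  rw [show Icc 1 n = Ioc 0 n from Icc_add_one_left_eq_Ioc 0 n,
    ← sum_Ioc_consecutive _ m.zero_le hmn]
  exact add_le_add head tail

end Cesaro

/-- Let `A ⊆ [0,1]` and let `a` be a sequence with all terms in `A`. If for some `n ≥ 1`
we have `[T(a)]_n < 1/8`, then `[T²(a)]_n < 15/16`. -/
theorem cesaro_sq_bound (A : Set ℝ) (hA : A ⊆ Set.Icc (0 : ℝ) 1)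
    (a : ℕ → ℝ) (ha : ∀ i, 1 ≤ i → a i ∈ A) (n : ℕ) (hn : 1 ≤ n)
    (h : cesaro a n < 1 / 8) :
    cesaro (cesaro a) n < 15 / 16 := by
  have ha₀ : ∀ i, 1 ≤ i → 0 ≤ a i := fun i hi => (hA (ha i hi)).1
  have ha₁ : ∀ i, 1 ≤ i → a i ≤ 1 := fun i hi => (hA (ha i hi)).2
  have hn₀ : (0 : ℝ) < n := by exact_mod_cast hn
  set m := n / 2
  have hmn : m ≤ n := Nat.div_le_self n 2
  have hm : (m : ℝ) * 2 ≤ n := by exact_mod_cast Nat.div_mul_le_self n 2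
  have hm' : (n : ℝ) ≤ 2 * m + 1 := by exact_mod_cast by omega
  have tail : (n : ℝ) * cesaro a n / (m + 1) ≤ 1 / 4 := by
    rw [div_le_iff₀ (by positivity)]
    linarith [mul_lt_mul_of_pos_left h hn₀]
  rw [cesaro, div_lt_iff₀ hn₀]
  calc ∑ k ∈ Icc 1 n, cesaro a k
      ≤ m + (n - m) * (n * cesaro a n / (m + 1)) :=
        sum_cesaro_le ha₀ ha₁ hmn
    _ ≤ m + (n - m) * (1 / 4) := by
        gcongr
        exact sub_nonneg.mpr (by exact_mod_cast hmn)
    _ < 15 / 16 * n := by linarith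
end
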